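/- arXiv:2605.26661 — 2 statements merged into one kernel-verified Lean document; each statement's English description precedes it below -/
import Mathlib

section
/- Let z₁,…,z_N ∈ ℝ^d, κ > 0, and suppose W* = (w*₁,…,w*_M) with each ‖w*_y‖₂ = 1 is a KKT point of the constrained minimization of the softmax cross-entropy loss ℒ(W) = −Σᵢ log( exp(⟨z_i, w_{ŷ_i}⟩/κ)/Σ_y exp(⟨z_i, w_y⟩/κ) ) subject to ‖w_y‖₂ = 1 for all y. If the vector v_y = Σ_{i: ŷ_i=y}(1−π_{iy}) z_i − Σ_{i: ŷ_i≠y} π_{iy} z_i is nonzero (with π_{iy} the softmax probabilities at W*), then w*_y = ± v_y/‖v_y‖₂; in particular w*_y lies in span{z₁,…,z_N}. -/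
/-!
Only the scores `⟪z_i, w_y⟫ / κ` depend on `w_y`, and the derivative of the per-sample
cross-entropy `-log π_{i ŷ_i}` in its `y`-th score is `π_{iy} - [ŷ_i = y]`. Hence
`∇_{w_y} ℒ(W*) = -κ⁻¹ v_y`, and KKT stationarity reads `2 μ_y κ w*_y = v_y`. As `v_y ≠ 0`, the
unit vector `w*_y` is a nonzero multiple of `v_y`, i.e. `± v_y / ‖v_y‖`.
-/

open RealInnerProductSpace Finset Function

theorem HasGradientAt.sum {𝕜 F ι : Type*} [RCLike 𝕜] [NormedAddCommGroup F]
    [InnerProductSpace 𝕜 F] [CompleteSpace F] {u : Finset ι} {f : ι → F → 𝕜} {f' : ι → F}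
    {x : F} (h : ∀ i ∈ u, HasGradientAt (f i) (f' i) x) :
    HasGradientAt (fun y => ∑ i ∈ u, f i y) (∑ i ∈ u, f' i) x := by
  rw [hasGradientAt_iff_hasFDerivAt, map_sum]
  exact HasFDerivAt.fun_sum fun i hi => (h i hi).hasFDerivAt

theorem HasDerivAt.hasGradientAt_comp_inner {E : Type*} [NormedAddCommGroup E]
    [InnerProductSpace ℝ E] [CompleteSpace E] {h : ℝ → ℝ} {h' : ℝ} {z x : E}
    (hh : HasDerivAt h h' ⟪z, x⟫) : HasGradientAt (fun w => h ⟪z, w⟫) (h' • z) x := by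
  rw [hasGradientAt_iff_hasFDerivAt, map_smul]
  exact hh.comp_hasFDerivAt x (innerSL ℝ z).hasFDerivAt

theorem neg_log_exp_div_sum_exp {γ : Type*} [Fintype γ] (s : γ → ℝ) (k : γ) :
    -Real.log (Real.exp (s k) / ∑ j, Real.exp (s j)) = Real.log (∑ j, Real.exp (s j)) - s k := by
  have hpos : 0 < ∑ j, Real.exp (s j) := sum_pos (fun j _ => Real.exp_pos _) ⟨k, mem_univ k⟩
  rw [Real.log_div (Real.exp_ne_zero _) hpos.ne', Real.log_exp]
  ring

theorem sum_sub_ite_smul_eq_neg {ι E : Type*} [Fintype ι] [AddCommGroup E] [Module ℝ E]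
    (p : ι → Prop) [DecidablePred p] (a : ι → ℝ) (z : ι → E) :
    ∑ i, (a i - if p i then 1 else 0) • z i =
      -((∑ i ∈ univ.filter p, (1 - a i) • z i) - ∑ i ∈ univ.filter (fun i => ¬ p i), a i • z i) := by
  rw [sum_filter, sum_filter, ← sum_sub_distrib, ← sum_neg_distrib]
  refine sum_congr rfl fun i _ => ?_
  split_ifs <;> module

theorem eq_inv_norm_smul_or_eq_neg_of_smul_eq {E : Type*} [NormedAddCommGroup E]
    [NormedSpace ℝ E] {w v : E} {a : ℝ} (hw : ‖w‖ = 1) (hv : v ≠ 0) (h : a • w = v) :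
    w = ‖v‖⁻¹ • v ∨ w = -(‖v‖⁻¹ • v) := by
  have hnorm : ‖v‖ = |a| := by rw [← h, norm_smul, hw, mul_one, Real.norm_eq_abs]
  have ha : a ≠ 0 := by
    rintro rfl
    exact hv (by rw [← h, zero_smul])
  have hw' : w = a⁻¹ • v := by rw [← h, smul_smul, inv_mul_cancel₀ ha, one_smul]
  rcases abs_choice a with habs | habs <;> rw [hnorm, habs, hw']
  · exact Or.inl rfl
  · exact Or.inr (by rw [inv_neg, neg_smul, neg_neg])

section Update

variable {γ : Type*} [DecidableEq γ]

theorem hasDerivAt_update_apply (s : γ → ℝ) (j k : γ) (t : ℝ) :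
    HasDerivAt (fun t => update s j t k) (if k = j then 1 else 0) t := by
  by_cases hk : k = j
  · subst hk
    simpa using hasDerivAt_id' t
  · simpa [hk] using hasDerivAt_const t (s k)

variable [Fintype γ]

theorem hasDerivAt_sum_exp_update (s : γ → ℝ) (j : γ) (t : ℝ) :
    HasDerivAt (fun t => ∑ l, Real.exp (update s j t l)) (Real.exp t) t := by
  have hsum : (fun t => ∑ l, Real.exp (update s j t l)) =
      fun t => Real.exp t + ∑ l ∈ univ \ {j}, Real.exp (s l) := by
    funext t
    simp only [← comp_apply (f := Real.exp), comp_update, sum_update_of_mem (mem_univ j)]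
  rw [hsum]
  exact (Real.hasDerivAt_exp t).add_const _

theorem hasDerivAt_neg_log_softmax_update (s : γ → ℝ) (j k : γ) :
    HasDerivAt (fun t => -Real.log (Real.exp (update s j t k) / ∑ l, Real.exp (update s j t l)))
      (Real.exp (s j) / ∑ l, Real.exp (s l) - if k = j then 1 else 0) (s j) := by
  simp_rw [neg_log_exp_div_sum_exp]
  have hpos : ∑ l, Real.exp (update s j (s j) l) ≠ 0 := by
    rw [update_eq_self]
    exact (sum_pos (fun l _ => Real.exp_pos _) ⟨j, mem_univ j⟩).ne'
  have hd := ((hasDerivAt_sum_exp_update s j (s j)).log hpos).fun_sub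
    (hasDerivAt_update_apply s j k (s j))
  simpa only [update_eq_self] using hd

theorem hasGradientAt_crossEntropy_update {E ι : Type*} [NormedAddCommGroup E]
    [InnerProductSpace ℝ E] [CompleteSpace E] [Fintype ι]
    (z : ι → E) (yhat : ι → γ) (κ : ℝ) (W : γ → E) (y : γ) :
    HasGradientAt (fun w => -∑ i, Real.log (Real.exp (⟪z i, update W y w (yhat i)⟫ / κ) /
        ∑ y', Real.exp (⟪z i, update W y w y'⟫ / κ)))
      (∑ i, ((Real.exp (⟪z i, W y⟫ / κ) / ∑ y', Real.exp (⟪z i, W y'⟫ / κ)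
        - if yhat i = y then 1 else 0) / κ) • z i) (W y) := by
  simp_rw [← sum_neg_distrib]
  refine HasGradientAt.sum fun i _ => ?_
  set s : γ → ℝ := fun y' => ⟪z i, W y'⟫ / κ
  have hs : ∀ w y', ⟪z i, update W y w y'⟫ / κ = update s y (⟪z i, w⟫ / κ) y' :=
    fun w y' => apply_update (fun _ w => ⟪z i, w⟫ / κ) W y w y'
  simp_rw [hs]
  have hd := (hasDerivAt_neg_log_softmax_update s y (yhat i)).comp ⟪z i, W y⟫
    ((hasDerivAt_id' (x := ⟪z i, W y⟫)).div_const κ)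
  simpa [s, div_eq_mul_inv] using hd.hasGradientAt_comp_inner

end Update

/-- Theorem 1 of the paper: if `W*` (with unit-norm columns) is a KKT point of the
minimization of the softmax cross-entropy loss subject to `‖w_y‖ = 1` (i.e., there
exist multipliers `μ_y` with `∇_{w_y} L(W*) + 2 μ_y w*_y = 0`), and the vector
`v_y = Σ_{i : ŷ_i = y}(1 − π_{iy}) z_i − Σ_{i : ŷ_i ≠ y} π_{iy} z_i` is nonzero,
then `w*_y = ± v_y/‖v_y‖`; in particular `w*_y ∈ span{z_1,…,z_N}`. -/
theorem stmt_15 (d N M : ℕ) (κ : ℝ) (hκ : 0 < κ)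
    (z : Fin N → EuclideanSpace ℝ (Fin d)) (yhat : Fin N → Fin M)
    (L : (Fin M → EuclideanSpace ℝ (Fin d)) → ℝ)
    (hL : ∀ W, L W = -∑ i, Real.log (Real.exp (⟪z i, W (yhat i)⟫ / κ) /
        ∑ y, Real.exp (⟪z i, W y⟫ / κ)))
    (Wstar : Fin M → EuclideanSpace ℝ (Fin d))
    (hnorm : ∀ y, ‖Wstar y‖ = 1)
    (π : Fin N → Fin M → ℝ)
    (hπ : ∀ i y', π i y' = Real.exp (⟪z i, Wstar y'⟫ / κ) /
        ∑ y'', Real.exp (⟪z i, Wstar y''⟫ / κ))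
    (μ : Fin M → ℝ)
    (hKKT : ∀ y, ∀ G, HasGradientAt (fun v => L (Function.update Wstar y v)) G (Wstar y) →
        G + (2 * μ y) • Wstar y = 0)
    (y : Fin M)
    (v : EuclideanSpace ℝ (Fin d))
    (hv : v = (∑ i ∈ Finset.univ.filter fun i => yhat i = y, (1 - π i y) • z i) -
        ∑ i ∈ Finset.univ.filter fun i => yhat i ≠ y, π i y • z i)
    (hvne : v ≠ 0) :
    (Wstar y = ‖v‖⁻¹ • v ∨ Wstar y = -(‖v‖⁻¹ • v)) ∧
      Wstar y ∈ Submodule.span ℝ (Set.range z) := by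
  have hgrad : HasGradientAt (fun w => L (update Wstar y w)) (-(κ⁻¹ • v)) (Wstar y) := by
    have h := hasGradientAt_crossEntropy_update z yhat κ Wstar y
    simp_rw [← hπ, ← hL, div_eq_inv_mul, ← smul_smul, ← smul_sum,
      sum_sub_ite_smul_eq_neg (fun i => yhat i = y), ← hv, smul_neg] at h
    exact h
  have hWv : (κ * (2 * μ y)) • Wstar y = v := by
    have hk : (2 * μ y) • Wstar y = κ⁻¹ • v := (neg_add_eq_zero.mp (hKKT y _ hgrad)).symm
    rw [mul_smul, hk, smul_smul, mul_inv_cancel₀ hκ.ne', one_smul]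
  have hv_mem : v ∈ Submodule.span ℝ (Set.range z) := by
    rw [hv]
    exact sub_mem (sum_mem fun i _ => Submodule.smul_mem _ _ (Submodule.subset_span ⟨i, rfl⟩))
      (sum_mem fun i _ => Submodule.smul_mem _ _ (Submodule.subset_span ⟨i, rfl⟩))
  have hdir := eq_inv_norm_smul_or_eq_neg_of_smul_eq (hnorm y) hvne hWv
  refine ⟨hdir, ?_⟩
  rcases hdir with h | h <;> rw [h]
  · exact Submodule.smul_mem _ _ hv_mem
  · exact neg_mem (Submodule.smul_mem _ _ hv_mem)
end

section
/- Let R = [r₁,…,r_M] and W = [w₁,…,w_M] be d×M matrices whose columns are unit vectors, with each w_j lying in a fixed linear subspace S ⊆ ℝ^d. Then ‖R − W‖_F² ≥ Σ_{j=1}^M 2(1 − ‖Proj_S(r_j)‖₂). -/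
open RealInnerProductSpace

/-
Expanding the square, ‖r − w‖² = 2 − 2⟪r, w⟫ for unit vectors. Since w ∈ S, the component of r
orthogonal to S does not see w, so ⟪r, w⟫ = ⟪Proj_S r, w⟫ ≤ ‖Proj_S r‖ by Cauchy–Schwarz. Summing
over the columns gives the bound.
-/

section

variable {E : Type*} [NormedAddCommGroup E] [InnerProductSpace ℝ E]

theorem Submodule.real_inner_le_norm_orthogonalProjectionOnto_mul_norm (K : Submodule ℝ E)
    [K.HasOrthogonalProjection] (v : E) {w : E} (hw : w ∈ K) :
    ⟪v, w⟫ ≤ ‖K.orthogonalProjectionOnto v‖ * ‖w‖ := by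
  rw [← K.inner_orthogonalProjectionOnto_eq_of_mem_right ⟨w, hw⟩]
  exact real_inner_le_norm _ _

theorem two_mul_one_sub_norm_orthogonalProjectionOnto_le_norm_sub_sq (K : Submodule ℝ E)
    [K.HasOrthogonalProjection] {v w : E} (hv : ‖v‖ = 1) (hw : ‖w‖ = 1) (hwK : w ∈ K) :
    2 * (1 - ‖K.orthogonalProjectionOnto v‖) ≤ ‖v - w‖ ^ 2 := by
  have hinner := K.real_inner_le_norm_orthogonalProjectionOnto_mul_norm v hwK
  rw [hw, mul_one] at hinner
  rw [norm_sub_sq_real, hv, hw]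
  linarith

end

/-- Matrix form of the modality-gap lower bound: for matrices `R = [r_1,…,r_M]` and
`W = [w_1,…,w_M]` with unit-vector columns and each `w_j ∈ S`,
`‖R − W‖_F² = Σ_j ‖r_j − w_j‖² ≥ Σ_j 2(1 − ‖Proj_S r_j‖)`. -/
theorem stmt_17 (d M : ℕ) (r w : Fin M → EuclideanSpace ℝ (Fin d))
    (S : Submodule ℝ (EuclideanSpace ℝ (Fin d)))
    (hr : ∀ j, ‖r j‖ = 1) (hw : ∀ j, ‖w j‖ = 1) (hwS : ∀ j, w j ∈ S) :
    ∑ j, 2 * (1 - ‖(S.orthogonalProjectionOnto (r j) : EuclideanSpace ℝ (Fin d))‖) ≤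
      ∑ j, ‖r j - w j‖ ^ 2 :=
  Finset.sum_le_sum fun j _ =>
    two_mul_one_sub_norm_orthogonalProjectionOnto_le_norm_sub_sq S (hr j) (hw j) (hwS j)
end
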